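/- Let M_n ⊆ R_n be the set of multisegments with at most one cut per column, and M = ⊔ M_n. If M ∈ M_{p+q} has a special full column at p, then M = (leftRestrict p M) * (rightRestrict q M); consequently, concatenation gives a bijection from M_p × M_q onto the set of multisegments in M_{p+q} having a special full column at p. -/

import Mathlib

/-- A segment is an interval `[i,j]` of positive integers, encoded as the
pair `(i, j)` with `1 ≤ i ≤ j`.  A multisegment is a multiset of segments. -/
abbrev Seg := ℕ × ℕ

/-- The weight of the multisegment `M` at `k`: the number of segments of `M`
containing `k`. -/
def wt (M : Multiset Seg) (k : ℕ) : ℕ :=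
  (M.filter (fun s => s.1 ≤ k ∧ k ≤ s.2)).card

/-- `M` belongs to `R_n`: all its members are segments contained in `[1,n]`,
and its weight is `(n+1, …, n+1)`. -/
def InR (n : ℕ) (M : Multiset Seg) : Prop :=
  (∀ s ∈ M, 1 ≤ s.1 ∧ s.1 ≤ s.2 ∧ s.2 ≤ n) ∧
  ∀ k, 1 ≤ k → k ≤ n → wt M k = n + 1

/-- Concatenation of multisegments `M ∈ R_p` and `N ∈ R_q`: keep the segments
of `M` ending before `p` and those of `N` (shifted by `p`) starting after `1`,
and glue the segments of `M` ending at `p` (padded with `q` copies of `[1,p]`)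
to the segments of `N` starting at `1` (padded with `p` copies of `[1,q]`),
matching shortest with shortest. -/
def concatMS (p q : ℕ) (M N : Multiset Seg) : Multiset Seg :=
  if p = 0 then N
  else if q = 0 then M
  else
    M.filter (fun s => s.2 < p)
      + (N.filter (fun s => 1 < s.1)).map (fun s => (s.1 + p, s.2 + p))
      + ↑(List.map (fun x : ℕ × ℕ => (x.1, x.2 + p))
          (List.zip
            ((((M.filter (fun s : Seg => s.2 = p)).map Prod.fst
                + Multiset.replicate q 1).sort (· ≤ ·)).reverse)
            ((((N.filter (fun s : Seg => s.1 = 1)).map Prod.snd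
                + Multiset.replicate p q).sort (· ≤ ·)))))

/-- Suspension of a multisegment `M ∈ R_n`: each segment is pushed inward
(`[i,j] ↦ [i+1,j+1]`, keeping start `1` at `1` and sending end `n` to `n+2`)
and the four segments `[1,1]`, `[2,n+2]`, `[1,n+1]`, `[n+2,n+2]` are added;
the suspension of the empty multisegment is `{[1,1],[2,2],[1,2]}`. -/
def suspMS (n : ℕ) (M : Multiset Seg) : Multiset Seg :=
  if n = 0 then {(1, 1), (2, 2), (1, 2)}
  else
    M.map (fun s => (if s.1 = 1 then 1 else s.1 + 1, if s.2 = n then n + 2 else s.2 + 1))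
      + {(1, 1), (2, n + 2), (1, n + 1), (n + 2, n + 2)}

/-- The `k`-th column of `M` is full: the number of segments of `M` containing
both `k` and `k+1` equals `min (w_k, w_{k+1})`. -/
def fullAt (M : Multiset Seg) (k : ℕ) : Prop :=
  (M.filter (fun s : Seg => s.1 ≤ k ∧ k + 1 ≤ s.2)).card = min (wt M k) (wt M (k + 1))

/-- `M` has a special full column at `k`: the `k`-th column is full and any
two segments of `M` containing the column `k` are comparable by inclusion. -/
def specialFullAt (M : Multiset Seg) (k : ℕ) : Prop :=
  fullAt M k ∧ ∀ A ∈ M, ∀ B ∈ M, (A.1 ≤ k ∧ k + 1 ≤ A.2) → (B.1 ≤ k ∧ k + 1 ≤ B.2) →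
    ((B.1 ≤ A.1 ∧ A.2 ≤ B.2) ∨ (A.1 ≤ B.1 ∧ B.2 ≤ A.2))

/-- `M` belongs to `M_n ⊆ R_n`: it has at most one cut per column, i.e. for
each column `k` the number of segments containing both `k` and `k+1` is at
least `min (w_k, w_{k+1}) - 1`. -/
def InM (n : ℕ) (M : Multiset Seg) : Prop :=
  InR n M ∧ ∀ k, 1 ≤ k → k < n →
    min (wt M k) (wt M (k + 1))
      ≤ (M.filter (fun s : Seg => s.1 ≤ k ∧ k + 1 ≤ s.2)).card + 1

/-- The left restriction of `M ∈ M_n` to `k`: truncate every segment at `k`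
and remove `n - k` copies of `[1,k]`. -/
def leftRes (n k : ℕ) (M : Multiset Seg) : Multiset Seg :=
  ((M.filter (fun s : Seg => s.1 ≤ k)).map (fun s : Seg => (s.1, min s.2 k)))
    - Multiset.replicate (n - k) (1, k)

/-- The right restriction of `M ∈ M_n` to `k`: keep the last `k` vertices,
truncating segments on the left and renumbering, and remove `n - k` copies of
`[1,k]`. -/
def rightRes (n k : ℕ) (M : Multiset Seg) : Multiset Seg :=
  ((M.filter (fun s : Seg => n - k + 1 ≤ s.2)).map
      (fun s : Seg => (max s.1 (n - k + 1) - (n - k), s.2 - (n - k))))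
    - Multiset.replicate (n - k) (1, k)

/-!
Cut a multisegment of `M_{p+q}` at column `p`: `truncLeft p` keeps the segments meeting `[1, p]`
and cuts them off after `p`; `truncRight p` keeps those meeting `[p + 1, p + q]`, cuts them off
before `p + 1` and shifts them down by `p`. The restrictions are these truncations with the padding
copies of `[1, p]`, resp. `[1, q]`, removed, and the truncations preserve the weights and cuts on
their side of the column. The padding really is there because in `M_n` at most one segment ends
(starts) at each inner column; hence the restrictions lie in `M_p` and `M_q`. Conversely the
truncations of a concatenation `M * N` are `M` and `N` plus their padding: this puts `M * N` in
`M_{p+q}` and shows that the restrictions recover `M` and `N`, so concatenation is injective.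

If `M` has a special full column at `p`, no segment of `M` ends at `p` or starts at `p + 1`, and
the segments crossing column `p` form a nest. A nest is determined by its multisets of starts and
of ends, and pairing the starts in decreasing order with the ends in increasing order, as
concatenation does, rebuilds it; so `M` is the concatenation of its restrictions.
-/

open Multiset

section MultisetLemmas

variable {α : Type*}

lemma map_eq_self {f : α → α} {s : Multiset α} (h : ∀ x ∈ s, f x = x) : s.map f = s :=
  (map_congr rfl h).trans (map_id s)

lemma filter_eq_filter_add_filter {P Q R : α → Prop} [DecidablePred P] [DecidablePred Q]
    [DecidablePred R] {M : Multiset α} (h : ∀ a ∈ M, (P a ↔ Q a ∨ R a) ∧ ¬(Q a ∧ R a)) :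
    M.filter P = M.filter Q + M.filter R := by
  rw [filter_congr fun a ha => (h a ha).1, ← add_zero (filter _ M), filter_add_filter,
    filter_eq_nil.mpr fun a ha => (h a ha).2]

lemma filter_add_filter_eq {Q R : α → Prop} [DecidablePred Q] [DecidablePred R]
    {M : Multiset α} (h : ∀ a ∈ M, Q a ↔ ¬R a) : M.filter Q + M.filter R = M := by
  rw [filter_congr h, add_comm, filter_add_not]

lemma card_filter_le_card_filter_add {P Q R : α → Prop} [DecidablePred P] [DecidablePred Q]
    [DecidablePred R] {M : Multiset α} (h : ∀ a ∈ M, P a → Q a ∨ R a) :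
    (M.filter P).card ≤ (M.filter Q).card + (M.filter R).card := by
  simp only [← countP_eq_card_filter]
  induction M using Multiset.induction_on with
  | empty => simp
  | cons a M ih =>
    have := ih fun b hb => h b (mem_cons_of_mem hb)
    have := h a (mem_cons_self a M)
    simp only [countP_cons]
    split_ifs <;> simp_all <;> omega

lemma card_filter_replicate (P : α → Prop) [DecidablePred P] (m : ℕ) (a : α) :
    ((replicate m a).filter P).card = if P a then m else 0 := by
  split_ifs with h
  · rw [filter_eq_self.mpr fun b hb => eq_of_mem_replicate hb ▸ h, card_replicate]
  · rw [filter_eq_nil.mpr fun b hb => eq_of_mem_replicate hb ▸ h, card_zero]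

lemma filter_tsub_replicate_add [DecidableEq α] {P : α → Prop} [DecidablePred P]
    {T : Multiset α} {m : ℕ} {a : α} (ha : P a) (hle : replicate m a ≤ T) :
    (T - replicate m a).filter P + replicate m a = T.filter P := by
  have hrep : (replicate m a).filter P = replicate m a :=
    filter_eq_self.mpr fun b hb => eq_of_mem_replicate hb ▸ ha
  rw [filter_sub, hrep, tsub_add_cancel_of_le (hrep ▸ filter_le_filter P hle)]

end MultisetLemmas

section Weights

def across (k : ℕ) (M : Multiset Seg) : Multiset Seg :=
  M.filter fun s : Seg => s.1 ≤ k ∧ k + 1 ≤ s.2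

def SegsIn (n : ℕ) (M : Multiset Seg) : Prop :=
  ∀ s ∈ M, 1 ≤ s.1 ∧ s.1 ≤ s.2 ∧ s.2 ≤ n

variable {n k : ℕ} {M : Multiset Seg}

lemma InM.segsIn (hM : InM n M) : SegsIn n M := hM.1.1

lemma InM.wt_eq (hM : InM n M) (hk : 1 ≤ k) (hkn : k ≤ n) : wt M k = n + 1 :=
  hM.1.2 k hk hkn

lemma InM.le_card_across (hM : InM n M) (hk : 1 ≤ k) (hkn : k < n) : n ≤ (across k M).card := by
  have := hM.2 k hk hkn
  rw [hM.wt_eq hk hkn.le, hM.wt_eq (by omega) hkn, min_self] at this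
  exact Nat.le_of_succ_le_succ this

lemma InM.eq_zero (hM : InM 0 M) : M = 0 :=
  eq_zero_of_forall_notMem fun s hs => by have := hM.segsIn s hs; omega

lemma inM_zero : InM 0 0 :=
  ⟨⟨fun _ hs => absurd hs (notMem_zero _), fun _ _ _ => by omega⟩, fun _ _ _ => by omega⟩

lemma wt_add (M N : Multiset Seg) (k : ℕ) : wt (M + N) k = wt M k + wt N k := by
  simp only [wt, filter_add, card_add]

lemma across_add (k : ℕ) (M N : Multiset Seg) : across k (M + N) = across k M + across k N :=
  filter_add _ _ _

lemma wt_replicate {m : ℕ} (hk : 1 ≤ k) (hkn : k ≤ n) : wt (replicate m (1, n)) k = m := by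
  rw [wt, card_filter_replicate, if_pos ⟨hk, hkn⟩]

lemma card_across_replicate {m : ℕ} (hk : 1 ≤ k) (hkn : k < n) :
    (across k (replicate m (1, n))).card = m := by
  rw [across, card_filter_replicate, if_pos ⟨hk, hkn⟩]

lemma wt_eq_card_filter_snd_eq_add (hM : ∀ s ∈ M, s.1 ≤ s.2) (k : ℕ) :
    wt M k = (M.filter (·.2 = k)).card + (across k M).card := by
  rw [wt, across, ← card_add]
  exact congrArg card (filter_eq_filter_add_filter fun s hs => by have := hM s hs; omega)

lemma wt_succ_eq_card_filter_fst_eq_add (hM : ∀ s ∈ M, s.1 ≤ s.2) (k : ℕ) :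
    wt M (k + 1) = (M.filter (·.1 = k + 1)).card + (across k M).card := by
  rw [wt, across, ← card_add]
  exact congrArg card (filter_eq_filter_add_filter fun s hs => by have := hM s hs; omega)

lemma InM.card_filter_snd_eq_le_one (hM : InM n M) (hk : 1 ≤ k) (hkn : k < n) :
    (M.filter (·.2 = k)).card ≤ 1 := by
  have := wt_eq_card_filter_snd_eq_add (fun s hs => (hM.segsIn s hs).2.1) k
  have := hM.le_card_across hk hkn
  rw [hM.wt_eq hk hkn.le] at *
  omega

lemma InM.card_filter_fst_eq_le_one (hM : InM n M) (hk : 1 ≤ k) (hkn : k < n) :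
    (M.filter (·.1 = k + 1)).card ≤ 1 := by
  have := wt_succ_eq_card_filter_fst_eq_add (fun s hs => (hM.segsIn s hs).2.1) k
  have := hM.le_card_across hk hkn
  rw [hM.wt_eq (by omega) hkn] at *
  omega

lemma InM.card_filter_snd_lt_le (hM : InM n M) (hkn : k ≤ n) :
    (M.filter (·.2 < k)).card ≤ k - 1 := by
  induction k with
  | zero => simp
  | succ k ih =>
    rcases Nat.eq_zero_or_pos k with rfl | hk
    · rw [filter_eq_nil.mpr fun s hs => by have := hM.segsIn s hs; omega, card_zero]
    · rw [filter_eq_filter_add_filter (Q := (·.2 < k)) (R := (·.2 = k)) fun s _ => by omega,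
        card_add]
      have := hM.card_filter_snd_eq_le_one hk hkn
      have := ih (by omega)
      omega

lemma InM.card_filter_lt_fst_le (hM : InM n M) (hk : 1 ≤ k) (hkn : k ≤ n) :
    (M.filter (k < ·.1)).card ≤ n - k := by
  induction hkn using Nat.decreasingInduction with
  | self =>
    rw [filter_eq_nil.mpr fun s hs => by have := hM.segsIn s hs; omega, card_zero]
    exact Nat.zero_le _
  | of_succ k hkn ih =>
    rw [filter_eq_filter_add_filter (Q := (·.1 = k + 1)) (R := (k + 1 < ·.1)) fun s _ => by
      omega, card_add]
    have := hM.card_filter_fst_eq_le_one hk hkn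
    have := ih (by omega)
    omega

lemma inM_tsub_replicate {m : ℕ} {T : Multiset Seg} (hle : replicate m (1, n) ≤ T)
    (hseg : SegsIn n T) (hwt : ∀ k, 1 ≤ k → k ≤ n → wt T k = n + m + 1)
    (hcut : ∀ k, 1 ≤ k → k < n → n + m ≤ (across k T).card) :
    InM n (T - replicate m (1, n)) := by
  have hT : T = (T - replicate m (1, n)) + replicate m (1, n) := (tsub_add_cancel_of_le hle).symm
  have hwt' : ∀ k, 1 ≤ k → k ≤ n → wt (T - replicate m (1, n)) k = n + 1 := fun k hk hkn => by
    have := hwt k hk hkn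
    rw [hT, wt_add, wt_replicate hk hkn] at this
    omega
  refine ⟨⟨fun s hs => hseg s (mem_of_le tsub_le_self hs), hwt'⟩, fun k hk hkn => ?_⟩
  have := hcut k hk hkn
  rw [hT, across_add, card_add, card_across_replicate hk hkn] at this
  rw [hwt' k hk hkn.le, hwt' (k + 1) (by omega) hkn, min_self]
  change n + 1 ≤ (across k _).card + 1
  omega

end Weights

section Truncation

def truncLeft (p : ℕ) (M : Multiset Seg) : Multiset Seg :=
  (M.filter fun s : Seg => s.1 ≤ p).map fun s : Seg => (s.1, min s.2 p)

def truncRight (m : ℕ) (M : Multiset Seg) : Multiset Seg :=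
  (M.filter fun s : Seg => m + 1 ≤ s.2).map fun s : Seg => (max s.1 (m + 1) - m, s.2 - m)

variable {p q k : ℕ} {M : Multiset Seg}

lemma leftRes_add_left : leftRes (p + q) p M = truncLeft p M - replicate q (1, p) := by
  rw [leftRes, Nat.add_sub_cancel_left]
  rfl

lemma rightRes_add_right : rightRes (p + q) q M = truncRight p M - replicate p (1, q) := by
  rw [rightRes, Nat.add_sub_cancel]
  rfl

lemma truncLeft_add (N : Multiset Seg) : truncLeft p (M + N) = truncLeft p M + truncLeft p N := by
  simp only [truncLeft, filter_add, map_add]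

lemma truncRight_add (N : Multiset Seg) :
    truncRight p (M + N) = truncRight p M + truncRight p N := by
  simp only [truncRight, filter_add, map_add]

lemma wt_truncLeft (hk : k ≤ p) : wt (truncLeft p M) k = wt M k := by
  simp only [wt, truncLeft, filter_map, card_map, filter_filter, Function.comp_def]
  exact congrArg card (filter_congr fun s _ => by omega)

lemma card_across_truncLeft (hk : k < p) : (across k (truncLeft p M)).card = (across k M).card := by
  simp only [across, truncLeft, filter_map, card_map, filter_filter, Function.comp_def]
  exact congrArg card (filter_congr fun s _ => by omega)

lemma wt_truncRight (hk : 1 ≤ k) : wt (truncRight p M) k = wt M (k + p) := by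
  simp only [wt, truncRight, filter_map, card_map, filter_filter, Function.comp_def]
  exact congrArg card (filter_congr fun s _ => by omega)

lemma card_across_truncRight (hk : 1 ≤ k) :
    (across k (truncRight p M)).card = (across (k + p) M).card := by
  simp only [across, truncRight, filter_map, card_map, filter_filter, Function.comp_def]
  exact congrArg card (filter_congr fun s _ => by omega)

lemma SegsIn.truncLeft (hM : SegsIn (p + q) M) : SegsIn p (truncLeft p M) := by
  intro s hs
  obtain ⟨t, ht, rfl⟩ := mem_map.mp hs
  have := hM t (mem_of_mem_filter ht)
  have := (mem_filter.mp ht).2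
  dsimp only
  omega

lemma SegsIn.truncRight (hM : SegsIn (p + q) M) : SegsIn q (truncRight p M) := by
  intro s hs
  obtain ⟨t, ht, rfl⟩ := mem_map.mp hs
  have := hM t (mem_of_mem_filter ht)
  have := (mem_filter.mp ht).2
  dsimp only
  omega

lemma truncLeft_eq_self (h : ∀ s ∈ M, s.1 ≤ s.2 ∧ s.2 ≤ p) : truncLeft p M = M := by
  rw [truncLeft, filter_eq_self.mpr fun s hs => (h s hs).1.trans (h s hs).2]
  exact map_eq_self fun s hs => by rw [min_eq_left (h s hs).2]

lemma truncLeft_eq_zero (h : ∀ s ∈ M, p < s.1) : truncLeft p M = 0 := by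
  rw [truncLeft, filter_eq_nil.mpr fun s hs => by have := h s hs; omega, map_zero]

lemma truncLeft_eq_map (h : ∀ s ∈ M, s.1 ≤ p ∧ p ≤ s.2) :
    truncLeft p M = M.map fun s => (s.1, p) := by
  rw [truncLeft, filter_eq_self.mpr fun s hs => (h s hs).1]
  exact map_congr rfl fun s hs => by rw [min_eq_right (h s hs).2]

lemma truncRight_map_add (h : ∀ s ∈ M, 1 ≤ s.1 ∧ s.1 ≤ s.2) :
    truncRight p (M.map fun s => (s.1 + p, s.2 + p)) = M := by
  rw [truncRight, filter_map, filter_eq_self.mpr fun s hs => by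
    have := h s hs; dsimp only [Function.comp_apply]; omega, map_map]
  exact map_eq_self fun s hs => by have := h s hs; dsimp only [Function.comp_apply]; ext <;> omega

lemma truncRight_zero (h : ∀ s ∈ M, 1 ≤ s.1 ∧ s.1 ≤ s.2) : truncRight 0 M = M := by
  simpa using truncRight_map_add (p := 0) h

lemma truncRight_eq_zero (h : ∀ s ∈ M, s.2 ≤ p) : truncRight p M = 0 := by
  rw [truncRight, filter_eq_nil.mpr fun s hs => by have := h s hs; omega, map_zero]

lemma truncRight_eq_map (h : ∀ s ∈ M, s.1 ≤ p + 1 ∧ p + 1 ≤ s.2) :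
    truncRight p M = M.map fun s => (1, s.2 - p) := by
  rw [truncRight, filter_eq_self.mpr fun s hs => (h s hs).2]
  exact map_congr rfl fun s hs => by have := h s hs; ext <;> dsimp only; omega

lemma filter_snd_lt_truncLeft (hseg : ∀ s ∈ M, s.1 ≤ s.2) :
    (truncLeft p M).filter (·.2 < p) = M.filter (·.2 < p) := by
  rw [truncLeft, filter_map, filter_filter,
    filter_congr (q := fun s : Seg => s.2 < p) fun s hs => by
      have := hseg s hs; dsimp only [Function.comp_apply]; omega]
  exact map_eq_self fun s hs => by rw [min_eq_left (mem_filter.mp hs).2.le]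

lemma filter_snd_eq_truncLeft :
    (truncLeft p M).filter (·.2 = p)
      = (M.filter fun s => s.1 ≤ p ∧ p ≤ s.2).map fun s => (s.1, p) := by
  rw [truncLeft, filter_map, filter_filter]
  refine (congrArg _ (filter_congr fun s _ => by dsimp only [Function.comp_apply]; omega)).trans
    (map_congr rfl fun s hs => by rw [min_eq_right (mem_filter.mp hs).2.2])

lemma map_filter_one_lt_truncRight (hseg : ∀ s ∈ M, s.1 ≤ s.2) :
    ((truncRight p M).filter (1 < ·.1)).map (fun s => (s.1 + p, s.2 + p))
      = M.filter (p + 2 ≤ ·.1) := by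
  rw [truncRight, filter_map, filter_filter,
    filter_congr (q := fun s : Seg => p + 2 ≤ s.1) fun s hs => by
      have := hseg s hs; dsimp only [Function.comp_apply]; omega, map_map]
  exact map_eq_self fun s hs => by
    have := hseg s (mem_of_mem_filter hs)
    have := (mem_filter.mp hs).2
    dsimp only [Function.comp_apply]
    ext <;> dsimp only <;> omega

lemma filter_fst_eq_one_truncRight :
    (truncRight p M).filter (·.1 = 1)
      = (M.filter fun s => s.1 ≤ p + 1 ∧ p + 1 ≤ s.2).map fun s => (1, s.2 - p) := by
  rw [truncRight, filter_map, filter_filter]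
  refine (congrArg _ (filter_congr fun s _ => by dsimp only [Function.comp_apply]; omega)).trans
    (map_congr rfl fun s hs => by have := (mem_filter.mp hs).2; ext <;> dsimp only; omega)

lemma InM.replicate_le_truncLeft (hM : InM (p + q) M) (hp : 1 ≤ p) :
    replicate q (1, p) ≤ truncLeft p M := by
  rw [← le_count_iff_replicate_le, truncLeft, count_map, filter_filter]
  have hwt := hM.wt_eq le_rfl (by omega)
  have hlow := hM.card_filter_snd_lt_le (k := p) (by omega)
  have := card_filter_le_card_filter_add (M := M) (P := fun s : Seg => s.1 ≤ 1 ∧ 1 ≤ s.2)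
    (Q := fun s : Seg => (1, p) = (s.1, min s.2 p) ∧ s.1 ≤ p) (R := (·.2 < p))
    fun s hs h => by have := hM.segsIn s hs; simp only [Prod.mk.injEq]; omega
  rw [wt] at hwt
  omega

lemma InM.replicate_le_truncRight (hM : InM (p + q) M) (hq : 1 ≤ q) :
    replicate p (1, q) ≤ truncRight p M := by
  rw [← le_count_iff_replicate_le, truncRight, count_map, filter_filter]
  have hwt := hM.wt_eq (k := p + q) (by omega) le_rfl
  have hhigh := hM.card_filter_lt_fst_le (k := p + 1) (by omega) (by omega)
  have := card_filter_le_card_filter_add (M := M)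
    (P := fun s : Seg => s.1 ≤ p + q ∧ p + q ≤ s.2)
    (Q := fun s : Seg => (1, q) = (max s.1 (p + 1) - p, s.2 - p) ∧ p + 1 ≤ s.2)
    (R := (p + 1 < ·.1))
    fun s hs h => by have := hM.segsIn s hs; simp only [Prod.mk.injEq]; omega
  rw [wt] at hwt
  omega

lemma inM_leftRes (hM : InM (p + q) M) : InM p (leftRes (p + q) p M) := by
  rw [leftRes_add_left]
  rcases Nat.eq_zero_or_pos p with rfl | hp
  · rw [truncLeft_eq_zero fun s hs => (hM.segsIn s hs).1, zero_tsub]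
    exact inM_zero
  refine inM_tsub_replicate (hM.replicate_le_truncLeft hp) hM.segsIn.truncLeft
    (fun k hk hkp => ?_) fun k hk hkp => ?_
  · rw [wt_truncLeft hkp, hM.wt_eq hk (by omega)]
  · rw [card_across_truncLeft hkp]
    exact hM.le_card_across hk (by omega)

lemma inM_rightRes (hM : InM (p + q) M) : InM q (rightRes (p + q) q M) := by
  rw [rightRes_add_right]
  rcases Nat.eq_zero_or_pos q with rfl | hq
  · rw [truncRight_eq_zero (p := p) fun s hs => (hM.segsIn s hs).2.2, zero_tsub]
    exact inM_zero
  refine inM_tsub_replicate (hM.replicate_le_truncRight hq) hM.segsIn.truncRight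
    (fun k hk hkq => ?_) fun k hk hkq => ?_
  · rw [wt_truncRight hk, hM.wt_eq (by omega) (by omega)]
    ring
  · rw [card_across_truncRight hk, add_comm q p]
    exact hM.le_card_across (by omega) (by omega)

lemma inM_of_truncLeft_of_truncRight {K N : Multiset Seg} (hK : SegsIn (p + q) K)
    (hL : truncLeft p K = M + replicate q (1, p)) (hR : truncRight p K = N + replicate p (1, q))
    (hM : InM p M) (hN : InM q N) (hcross : p + q ≤ (across p K).card) : InM (p + q) K := by
  have hwt : ∀ k, 1 ≤ k → k ≤ p + q → wt K k = p + q + 1 := by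
    intro k hk hkn
    rcases le_or_gt k p with hkp | hpk
    · rw [← wt_truncLeft hkp, hL, wt_add, hM.wt_eq hk hkp, wt_replicate hk hkp]
      ring
    · obtain ⟨j, rfl⟩ : ∃ j, k = j + p := ⟨k - p, by omega⟩
      rw [← wt_truncRight (by omega), hR, wt_add, hN.wt_eq (by omega) (by omega),
        wt_replicate (by omega) (by omega)]
      ring
  have hcut : ∀ k, 1 ≤ k → k < p + q → p + q ≤ (across k K).card := by
    intro k hk hkn
    rcases lt_trichotomy k p with hkp | rfl | hpk
    · have := hM.le_card_across hk hkp
      rw [← card_across_truncLeft hkp, hL, across_add, card_add, card_across_replicate hk hkp]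
      omega
    · exact hcross
    · obtain ⟨j, rfl⟩ : ∃ j, k = j + p := ⟨k - p, by omega⟩
      have := hN.le_card_across (k := j) (by omega) (by omega)
      rw [← card_across_truncRight (by omega), hR, across_add, card_add,
        card_across_replicate (by omega) (by omega)]
      omega
  refine ⟨⟨hK, hwt⟩, fun k hk hkn => ?_⟩
  rw [hwt k hk hkn.le, hwt (k + 1) (by omega) hkn, min_self]
  change _ ≤ (across k K).card + 1
  have := hcut k hk hkn
  omega

end Truncation

section Nest

def IsNest (C : Multiset Seg) : Prop :=
  ∀ A ∈ C, ∀ B ∈ C, (B.1 ≤ A.1 ∧ A.2 ≤ B.2) ∨ (A.1 ≤ B.1 ∧ B.2 ≤ A.2)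

lemma specialFullAt_iff {M : Multiset Seg} {p : ℕ} :
    specialFullAt M p ↔ fullAt M p ∧ IsNest (across p M) := by
  simp only [specialFullAt, IsNest, across, mem_filter]
  exact and_congr_right' ⟨fun h A hA B hB => h A hA.1 B hB.1 hA.2 hB.2,
    fun h A hA B hB hA' hB' => h A ⟨hA, hA'⟩ B ⟨hB, hB'⟩⟩

lemma specialFullAt_of_across_eq_zero {M : Multiset Seg} {p : ℕ} (h : across p M = 0)
    (hwt : wt M p = 0 ∨ wt M (p + 1) = 0) : specialFullAt M p := by
  refine specialFullAt_iff.mpr ⟨?_, h ▸ fun A hA => absurd hA (notMem_zero A)⟩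
  change (across p M).card = _
  rcases hwt with hwt | hwt <;> simp [h, hwt]

lemma IsNest.mono {C D : Multiset Seg} (hD : IsNest D) (h : C ≤ D) : IsNest C :=
  fun A hA B hB => hD A (mem_of_le h hA) B (mem_of_le h hB)

lemma IsNest.map_snd {C : Multiset Seg} (hC : IsNest C) {f : ℕ → ℕ} (hf : Monotone f) :
    IsNest (C.map fun c => (c.1, f c.2)) := by
  simp only [IsNest, mem_map]
  rintro _ ⟨A, hA, rfl⟩ _ ⟨B, hB, rfl⟩
  rcases hC A hA B hB with h | h <;> [left; right] <;> exact ⟨h.1, hf h.2⟩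

/-- A segment of `C` of least length lies inside all the others. -/
lemma IsNest.exists_innermost {C : Multiset Seg} (hC : IsNest C) (hne : C ≠ 0) :
    ∃ c ∈ C, ∀ d ∈ C, d.1 ≤ c.1 ∧ c.2 ≤ d.2 := by
  obtain ⟨c, hc, hmin⟩ := exists_min_image (fun s : Seg => (s.2 : ℤ) - s.1) hne
  refine ⟨c, hc, fun d hd => ?_⟩
  have := hmin d hd
  rcases hC c hc d hd with h | h <;> omega

lemma IsNest.eq_of_map_eq {C D : Multiset Seg} (hC : IsNest C) (hD : IsNest D)
    (hfst : C.map Prod.fst = D.map Prod.fst) (hsnd : C.map Prod.snd = D.map Prod.snd) :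
    C = D := by
  induction hn : card C generalizing C D with
  | zero =>
    obtain rfl := card_eq_zero.mp hn
    rw [map_zero, eq_comm, Multiset.map_eq_zero] at hfst
    exact hfst.symm
  | succ n ih =>
    have hC0 : C ≠ 0 := by rintro rfl; simp at hn
    have hD0 : D ≠ 0 := by
      rintro rfl
      rw [map_zero, Multiset.map_eq_zero] at hfst
      exact hC0 hfst
    obtain ⟨c, hc, hcin⟩ := hC.exists_innermost hC0
    obtain ⟨d, hd, hdin⟩ := hD.exists_innermost hD0
    -- both innermost segments have the largest start and the smallest end
    have hcd : c = d := by
      obtain ⟨d', hd', hd'c⟩ := mem_map.mp (hfst ▸ mem_map_of_mem Prod.fst hc)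
      obtain ⟨c', hc', hc'd⟩ := mem_map.mp (hfst.symm ▸ mem_map_of_mem Prod.fst hd)
      obtain ⟨d'', hd'', hd''c⟩ := mem_map.mp (hsnd ▸ mem_map_of_mem Prod.snd hc)
      obtain ⟨c'', hc'', hc''d⟩ := mem_map.mp (hsnd.symm ▸ mem_map_of_mem Prod.snd hd)
      have := hdin d' hd'; have := hcin c' hc'; have := hdin d'' hd''; have := hcin c'' hc''
      exact Prod.ext (by omega) (by omega)
    subst hcd
    rw [← cons_erase hc, ← cons_erase hd] at hfst hsnd ⊢
    simp only [map_cons, cons_inj_right] at hfst hsnd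
    rw [ih (hC.mono (erase_le c C)) (hD.mono (erase_le c D)) hfst hsnd
      (by rw [card_erase_of_mem hc, hn]; rfl)]

end Nest

section Glue

def glue (X Y : Multiset ℕ) : Multiset Seg :=
  ((X.sort (· ≤ ·)).reverse.zip (Y.sort (· ≤ ·)) : List Seg)

variable {X Y : Multiset ℕ}

lemma mem_glue {z : Seg} (hz : z ∈ glue X Y) : z.1 ∈ X ∧ z.2 ∈ Y := by
  obtain ⟨h1, h2⟩ := List.of_mem_zip (mem_coe.mp hz)
  rw [List.mem_reverse, Multiset.mem_sort] at h1
  rw [Multiset.mem_sort] at h2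
  exact ⟨h1, h2⟩

lemma map_fst_glue (h : card X = card Y) : (glue X Y).map Prod.fst = X := by
  rw [glue, map_coe, List.map_fst_zip (by simp [h]), coe_reverse, sort_eq]

lemma map_snd_glue (h : card X = card Y) : (glue X Y).map Prod.snd = Y := by
  rw [glue, map_coe, List.map_snd_zip (by simp [h]), sort_eq]

lemma isNest_zip : ∀ {X Y : List ℕ}, X.Pairwise (· ≥ ·) → Y.Pairwise (· ≤ ·) →
    IsNest (X.zip Y : Multiset Seg)
  | [], _, _, _ => by simp [IsNest]
  | _ :: _, [], _, _ => by simp [IsNest]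
  | x :: X, y :: Y, hX, hY => by
    have hin : ∀ c ∈ X.zip Y, c.1 ≤ x ∧ y ≤ c.2 := fun c hc =>
      ⟨List.rel_of_pairwise_cons hX (List.of_mem_zip hc).1,
        List.rel_of_pairwise_cons hY (List.of_mem_zip hc).2⟩
    have ih := isNest_zip hX.of_cons hY.of_cons
    simp only [IsNest, List.zip_cons_cons, mem_coe, List.mem_cons] at ih ⊢
    rintro a (rfl | ha) b (rfl | hb)
    · exact Or.inl ⟨le_rfl, le_rfl⟩
    · exact Or.inl (hin b hb)
    · exact Or.inr (hin a ha)
    · exact ih a ha b hb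

lemma isNest_glue : IsNest (glue X Y) :=
  isNest_zip (List.pairwise_reverse.mpr (pairwise_sort _ _)) (pairwise_sort _ _)

lemma IsNest.glue_map_fst_map_snd {C : Multiset Seg} (hC : IsNest C) :
    glue (C.map Prod.fst) (C.map Prod.snd) = C :=
  isNest_glue.eq_of_map_eq hC (map_fst_glue (by simp)) (map_snd_glue (by simp))

end Glue

section Concat

variable {p q : ℕ} {M N : Multiset Seg}

def junction (p q : ℕ) (M N : Multiset Seg) : Multiset Seg :=
  (glue ((M.filter (·.2 = p)).map Prod.fst + replicate q 1)
    ((N.filter (·.1 = 1)).map Prod.snd + replicate p q)).map fun z => (z.1, z.2 + p)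

lemma concatMS_eq (hp : p ≠ 0) (hq : q ≠ 0) (M N : Multiset Seg) :
    concatMS p q M N = M.filter (·.2 < p)
      + (N.filter (1 < ·.1)).map (fun s => (s.1 + p, s.2 + p)) + junction p q M N := by
  rw [concatMS, if_neg hp, if_neg hq]
  rfl

lemma InM.card_filter_snd_eq (hM : InM p M) (hp : 1 ≤ p) : (M.filter (·.2 = p)).card = p + 1 := by
  rw [← hM.wt_eq hp le_rfl, wt]
  exact congrArg card (filter_congr fun s hs => by have := hM.segsIn s hs; omega)

lemma InM.card_filter_fst_eq (hN : InM q N) (hq : 1 ≤ q) : (N.filter (·.1 = 1)).card = q + 1 := by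
  rw [← hN.wt_eq le_rfl hq, wt]
  exact congrArg card (filter_congr fun s hs => by have := hN.segsIn s hs; omega)

lemma card_starts_eq_card_ends (hM : InM p M) (hN : InM q N) (hp : 1 ≤ p) (hq : 1 ≤ q) :
    card ((M.filter (·.2 = p)).map Prod.fst + replicate q 1)
      = card ((N.filter (·.1 = 1)).map Prod.snd + replicate p q) := by
  simp only [card_add, card_map, card_replicate, hM.card_filter_snd_eq hp,
    hN.card_filter_fst_eq hq]
  omega

lemma map_fst_junction (hM : InM p M) (hN : InM q N) (hp : 1 ≤ p) (hq : 1 ≤ q) :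
    (junction p q M N).map Prod.fst = (M.filter (·.2 = p)).map Prod.fst + replicate q 1 := by
  rw [junction, map_map]
  exact map_fst_glue (card_starts_eq_card_ends hM hN hp hq)

lemma map_snd_junction (hM : InM p M) (hN : InM q N) (hp : 1 ≤ p) (hq : 1 ≤ q) :
    (junction p q M N).map Prod.snd
      = ((N.filter (·.1 = 1)).map Prod.snd + replicate p q).map (· + p) := by
  have := congrArg (map (· + p)) (map_snd_glue (card_starts_eq_card_ends hM hN hp hq))
  rw [map_map] at this
  rw [junction, map_map, ← this]
  rfl

lemma mem_junction (hM : InM p M) (hN : InM q N) (hp : 1 ≤ p) (hq : 1 ≤ q) {z : Seg}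
    (hz : z ∈ junction p q M N) : 1 ≤ z.1 ∧ z.1 ≤ p ∧ p + 1 ≤ z.2 ∧ z.2 ≤ p + q := by
  obtain ⟨w, hw, rfl⟩ := mem_map.mp hz
  obtain ⟨h1, h2⟩ := mem_glue hw
  have hx : 1 ≤ w.1 ∧ w.1 ≤ p := by
    rcases mem_add.mp h1 with h | h
    · obtain ⟨s, hs, hsw⟩ := mem_map.mp h
      have := hM.segsIn s (mem_of_mem_filter hs)
      have := (mem_filter.mp hs).2
      omega
    · rw [eq_of_mem_replicate h]
      exact ⟨le_rfl, hp⟩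
  have hy : 1 ≤ w.2 ∧ w.2 ≤ q := by
    rcases mem_add.mp h2 with h | h
    · obtain ⟨s, hs, hsw⟩ := mem_map.mp h
      have := hN.segsIn s (mem_of_mem_filter hs)
      have := (mem_filter.mp hs).2
      omega
    · rw [eq_of_mem_replicate h]
      exact ⟨by omega, le_rfl⟩
  dsimp only
  omega

lemma mem_map_shift_filter (hN : InM q N) {z : Seg}
    (hz : z ∈ (N.filter (1 < ·.1)).map fun s => (s.1 + p, s.2 + p)) :
    p + 2 ≤ z.1 ∧ z.1 ≤ z.2 ∧ z.2 ≤ p + q := by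
  obtain ⟨s, hs, rfl⟩ := mem_map.mp hz
  have := hN.segsIn s (mem_of_mem_filter hs)
  have := (mem_filter.mp hs).2
  dsimp only
  omega

lemma truncLeft_concatMS (hM : InM p M) (hN : InM q N) (hp : 1 ≤ p) (hq : 1 ≤ q) :
    truncLeft p (concatMS p q M N) = M + replicate q (1, p) := by
  have hends : ((M.filter (fun s : Seg => s.2 = p)).map Prod.fst).map (fun x => (x, p))
      = M.filter (·.2 = p) := by
    rw [map_map]
    exact map_eq_self fun s hs => by rw [← (mem_filter.mp hs).2]; rfl
  have hsplit : M.filter (·.2 < p) + M.filter (·.2 = p) = M :=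
    filter_add_filter_eq fun s hs => by have := hM.segsIn s hs; omega
  have hjunction : (junction p q M N).map (fun s => (s.1, p))
      = ((M.filter (fun s : Seg => s.2 = p)).map Prod.fst + replicate q 1).map
          (fun x => (x, p)) := by
    rw [← map_fst_junction hM hN hp hq, map_map]
    rfl
  rw [concatMS_eq (by omega) (by omega), truncLeft_add, truncLeft_add,
    truncLeft_eq_self fun s hs => by
      have := hM.segsIn s (mem_of_mem_filter hs); have := (mem_filter.mp hs).2; omega,
    truncLeft_eq_zero fun s hs => by have := mem_map_shift_filter hN hs; omega,
    truncLeft_eq_map fun z hz => by have := mem_junction hM hN hp hq hz; omega,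
    hjunction, Multiset.map_add, hends, map_replicate, add_zero, ← add_assoc, hsplit]

lemma truncRight_concatMS (hM : InM p M) (hN : InM q N) (hp : 1 ≤ p) (hq : 1 ≤ q) :
    truncRight p (concatMS p q M N) = N + replicate p (1, q) := by
  have hstarts : ((N.filter (·.1 = 1)).map Prod.snd).map (fun y => (1, y))
      = N.filter (·.1 = 1) := by
    rw [map_map]
    exact map_eq_self fun s hs => by rw [← (mem_filter.mp hs).2]; rfl
  have hsplit : N.filter (·.1 = 1) + N.filter (1 < ·.1) = N :=
    filter_add_filter_eq fun s hs => by have := hN.segsIn s hs; omega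
  have hjunction : (junction p q M N).map (fun s => (1, s.2 - p))
      = ((N.filter (fun s : Seg => s.1 = 1)).map Prod.snd + replicate p q).map
          (fun y => (1, y)) := by
    rw [show (fun s : Seg => (1, s.2 - p)) = (fun y => (1, y - p)) ∘ Prod.snd from rfl,
      ← map_map, map_snd_junction hM hN hp hq, map_map]
    exact map_congr rfl fun y _ => by simp
  rw [concatMS_eq (by omega) (by omega), truncRight_add, truncRight_add,
    truncRight_eq_zero fun s hs => by have := (mem_filter.mp hs).2; omega,
    truncRight_map_add fun s hs => by
      have := hN.segsIn s (mem_of_mem_filter hs); omega,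
    truncRight_eq_map fun z hz => by have := mem_junction hM hN hp hq hz; omega,
    hjunction, Multiset.map_add, hstarts, map_replicate, zero_add, ← add_assoc,
    add_comm (N.filter _), hsplit]

lemma across_concatMS (hM : InM p M) (hN : InM q N) (hp : 1 ≤ p) (hq : 1 ≤ q) :
    across p (concatMS p q M N) = junction p q M N := by
  rw [concatMS_eq (by omega) (by omega), across_add, across_add, across, across, across,
    filter_eq_nil.mpr fun s hs => by have := (mem_filter.mp hs).2; omega,
    filter_eq_nil.mpr fun s hs => by have := mem_map_shift_filter hN hs; omega,
    filter_eq_self.mpr fun s hs => by have := mem_junction hM hN hp hq hs; omega,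
    zero_add, zero_add]

lemma card_junction (hM : InM p M) (hN : InM q N) (hp : 1 ≤ p) (hq : 1 ≤ q) :
    (junction p q M N).card = p + q + 1 := by
  rw [← card_map Prod.fst, map_fst_junction hM hN hp hq, card_add, card_map, card_replicate,
    hM.card_filter_snd_eq hp]
  ring

lemma segsIn_concatMS (hM : InM p M) (hN : InM q N) (hp : 1 ≤ p) (hq : 1 ≤ q) :
    SegsIn (p + q) (concatMS p q M N) := by
  intro s hs
  rw [concatMS_eq (by omega) (by omega)] at hs
  rcases mem_add.mp hs with hs | hs
  · rcases mem_add.mp hs with hs | hs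
    · have := hM.segsIn s (mem_of_mem_filter hs)
      omega
    · have := mem_map_shift_filter hN hs
      omega
  · have := mem_junction hM hN hp hq hs
    omega

lemma inM_concatMS (hM : InM p M) (hN : InM q N) : InM (p + q) (concatMS p q M N) := by
  rcases Nat.eq_zero_or_pos p with rfl | hp
  · rwa [concatMS, if_pos rfl, zero_add]
  rcases Nat.eq_zero_or_pos q with rfl | hq
  · rwa [concatMS, if_neg (by omega), if_pos rfl]
  refine inM_of_truncLeft_of_truncRight (segsIn_concatMS hM hN hp hq)
    (truncLeft_concatMS hM hN hp hq) (truncRight_concatMS hM hN hp hq) hM hN ?_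
  rw [across_concatMS hM hN hp hq, card_junction hM hN hp hq]
  omega

lemma specialFullAt_concatMS (hM : InM p M) (hN : InM q N) :
    specialFullAt (concatMS p q M N) p := by
  rcases Nat.eq_zero_or_pos p with rfl | hp
  · rw [concatMS, if_pos rfl]
    refine specialFullAt_of_across_eq_zero ?_ (Or.inl ?_)
    · exact filter_eq_nil.mpr fun s hs => by have := hN.segsIn s hs; omega
    · exact card_eq_zero.mpr (filter_eq_nil.mpr fun s hs => by have := hN.segsIn s hs; omega)
  rcases Nat.eq_zero_or_pos q with rfl | hq
  · rw [concatMS, if_neg (by omega), if_pos rfl]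
    refine specialFullAt_of_across_eq_zero ?_ (Or.inr ?_)
    · exact filter_eq_nil.mpr fun s hs => by have := hM.segsIn s hs; omega
    · exact card_eq_zero.mpr (filter_eq_nil.mpr fun s hs => by have := hM.segsIn s hs; omega)
  have hK := inM_concatMS hM hN
  refine specialFullAt_iff.mpr ⟨?_, ?_⟩
  · change (across p _).card = _
    rw [across_concatMS hM hN hp hq, card_junction hM hN hp hq, hK.wt_eq hp (by omega),
      hK.wt_eq (by omega) (by omega), min_self]
  · rw [across_concatMS hM hN hp hq]
    exact isNest_glue.map_snd fun _ _ h => Nat.add_le_add_right h p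

lemma leftRes_concatMS (hM : InM p M) (hN : InM q N) :
    leftRes (p + q) p (concatMS p q M N) = M := by
  rcases Nat.eq_zero_or_pos p with rfl | hp
  · rw [concatMS, if_pos rfl, leftRes_add_left,
      truncLeft_eq_zero fun s hs => (hN.segsIn s hs).1, zero_tsub, hM.eq_zero]
  rcases Nat.eq_zero_or_pos q with rfl | hq
  · rw [concatMS, if_neg (by omega), if_pos rfl, leftRes_add_left,
      truncLeft_eq_self fun s hs => (hM.segsIn s hs).2, replicate_zero, tsub_zero]
  rw [leftRes_add_left, truncLeft_concatMS hM hN hp hq, add_tsub_cancel_right]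

lemma rightRes_concatMS (hM : InM p M) (hN : InM q N) :
    rightRes (p + q) q (concatMS p q M N) = N := by
  rcases Nat.eq_zero_or_pos p with rfl | hp
  · rw [concatMS, if_pos rfl, rightRes_add_right,
      truncRight_zero fun s hs => ⟨(hN.segsIn s hs).1, (hN.segsIn s hs).2.1⟩, replicate_zero,
      tsub_zero]
  rcases Nat.eq_zero_or_pos q with rfl | hq
  · rw [concatMS, if_neg (by omega), if_pos rfl, rightRes_add_right,
      truncRight_eq_zero fun s hs => (hM.segsIn s hs).2.2, zero_tsub, hN.eq_zero]
  rw [rightRes_add_right, truncRight_concatMS hM hN hp hq, add_tsub_cancel_right]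

end Concat

section Decomposition

variable {p q : ℕ} {M : Multiset Seg}

lemma fullAt.across_eq_filter_mem (hfull : fullAt M p) (hwt : wt M p ≤ wt M (p + 1)) :
    across p M = M.filter fun s => s.1 ≤ p ∧ p ≤ s.2 := by
  have hcard : (across p M).card = wt M p := by
    rw [show (across p M).card = _ from hfull, min_eq_left hwt]
  exact eq_of_le_of_card_le (monotone_filter_right M fun s h => ⟨h.1, by omega⟩) hcard.ge

lemma fullAt.across_eq_filter_mem_succ (hfull : fullAt M p) (hwt : wt M (p + 1) ≤ wt M p) :
    across p M = M.filter fun s => s.1 ≤ p + 1 ∧ p + 1 ≤ s.2 := by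
  have hcard : (across p M).card = wt M (p + 1) := by
    rw [show (across p M).card = _ from hfull, min_eq_right hwt]
  exact eq_of_le_of_card_le (monotone_filter_right M fun s h => ⟨by omega, h.2⟩) hcard.ge

/-- A full column `p` with equal weights at `p` and `p + 1` leaves no segment ending at `p` or
starting at `p + 1`. -/
lemma fullAt.filter_add_filter_add_across (hseg : ∀ s ∈ M, s.1 ≤ s.2) (hfull : fullAt M p)
    (hwt : wt M p = wt M (p + 1)) :
    M.filter (·.2 < p) + M.filter (p + 2 ≤ ·.1) + across p M = M := by
  have hleft := hfull.across_eq_filter_mem hwt.le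
  have hright := hfull.across_eq_filter_mem_succ hwt.ge
  have hmem : ∀ s ∈ M, s.1 ≤ p ∧ p + 1 ≤ s.2 ↔ ¬(s.2 < p ∨ p + 2 ≤ s.1) := by
    intro s hs
    have hl := congrArg (s ∈ ·) hleft
    have hr := congrArg (s ∈ ·) hright
    simp only [across, mem_filter, hs, true_and, eq_iff_iff] at hl hr
    have := hseg s hs
    omega
  rw [← filter_eq_filter_add_filter fun s hs => ⟨Iff.rfl, by have := hseg s hs; omega⟩,
    add_comm, across, filter_add_filter_eq hmem]

lemma InM.filter_snd_lt_leftRes (hM : InM (p + q) M) :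
    (leftRes (p + q) p M).filter (·.2 < p) = M.filter (·.2 < p) := by
  rw [leftRes_add_left, filter_sub, filter_snd_lt_truncLeft fun s hs => (hM.segsIn s hs).2.1,
    (filter_eq_nil (s := replicate q (1, p))).mpr fun s hs => by
      rw [eq_of_mem_replicate hs]; exact lt_irrefl p,
    tsub_zero]

lemma InM.map_filter_one_lt_rightRes (hM : InM (p + q) M) :
    ((rightRes (p + q) q M).filter (1 < ·.1)).map (fun s => (s.1 + p, s.2 + p))
      = M.filter (p + 2 ≤ ·.1) := by
  rw [rightRes_add_right, filter_sub,
    (filter_eq_nil (s := replicate p (1, q))).mpr fun s hs => by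
      rw [eq_of_mem_replicate hs]; exact lt_irrefl 1,
    tsub_zero, map_filter_one_lt_truncRight fun s hs => (hM.segsIn s hs).2.1]

lemma InM.map_fst_filter_snd_eq_leftRes (hM : InM (p + q) M) (hp : 1 ≤ p) :
    ((leftRes (p + q) p M).filter (·.2 = p)).map Prod.fst + replicate q 1
      = (M.filter fun s => s.1 ≤ p ∧ p ≤ s.2).map Prod.fst := by
  rw [← map_replicate Prod.fst q ((1 : ℕ), p), ← Multiset.map_add, leftRes_add_left,
    filter_tsub_replicate_add (P := (·.2 = p)) rfl (hM.replicate_le_truncLeft hp),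
    filter_snd_eq_truncLeft, map_map]
  rfl

lemma InM.map_snd_filter_fst_eq_rightRes (hM : InM (p + q) M) (hq : 1 ≤ q) :
    ((rightRes (p + q) q M).filter (·.1 = 1)).map Prod.snd + replicate p q
      = (M.filter fun s => s.1 ≤ p + 1 ∧ p + 1 ≤ s.2).map (·.2 - p) := by
  rw [← map_replicate Prod.snd p ((1 : ℕ), q), ← Multiset.map_add, rightRes_add_right,
    filter_tsub_replicate_add (P := (·.1 = 1)) rfl (hM.replicate_le_truncRight hq),
    filter_fst_eq_one_truncRight, map_map]
  rfl

lemma InM.wt_eq_wt_succ (hM : InM (p + q) M) (hp : 1 ≤ p) (hq : 1 ≤ q) :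
    wt M p = wt M (p + 1) := by
  rw [hM.wt_eq hp (by omega), hM.wt_eq (by omega) (by omega)]

lemma junction_leftRes_rightRes (hM : InM (p + q) M) (hsp : specialFullAt M p) (hp : 1 ≤ p)
    (hq : 1 ≤ q) : junction p q (leftRes (p + q) p M) (rightRes (p + q) q M) = across p M := by
  obtain ⟨hfull, hnest⟩ := specialFullAt_iff.mp hsp
  have hwt := hM.wt_eq_wt_succ hp hq
  have hglue : glue ((across p M).map Prod.fst) ((across p M).map (·.2 - p))
      = (across p M).map fun c => (c.1, c.2 - p) := by
    simpa only [map_map, Function.comp_def] using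
      (hnest.map_snd (f := (· - p)) fun _ _ h => Nat.sub_le_sub_right h p).glue_map_fst_map_snd
  rw [junction, hM.map_fst_filter_snd_eq_leftRes hp, hM.map_snd_filter_fst_eq_rightRes hq,
    ← hfull.across_eq_filter_mem hwt.le, ← hfull.across_eq_filter_mem_succ hwt.ge, hglue, map_map]
  exact map_eq_self fun c hc => by
    have := (mem_filter.mp hc).2
    ext <;> dsimp only [Function.comp_apply]; omega

lemma concatMS_leftRes_rightRes (hM : InM (p + q) M) (hsp : specialFullAt M p) :
    concatMS p q (leftRes (p + q) p M) (rightRes (p + q) q M) = M := by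
  rcases Nat.eq_zero_or_pos p with rfl | hp
  · rw [concatMS, if_pos rfl, rightRes_add_right, truncRight_zero fun s hs =>
      ⟨(hM.segsIn s hs).1, (hM.segsIn s hs).2.1⟩, replicate_zero, tsub_zero]
  rcases Nat.eq_zero_or_pos q with rfl | hq
  · rw [concatMS, if_neg (by omega), if_pos rfl, leftRes_add_left,
      truncLeft_eq_self (p := p) fun s hs => (hM.segsIn s hs).2, replicate_zero, tsub_zero]
  rw [concatMS_eq (by omega) (by omega), hM.filter_snd_lt_leftRes, hM.map_filter_one_lt_rightRes,
    junction_leftRes_rightRes hM hsp hp hq]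
  exact hsp.1.filter_add_filter_add_across (fun s hs => (hM.segsIn s hs).2.1)
    (hM.wt_eq_wt_succ hp hq)

end Decomposition

/-- if `M ∈ M_{p+q}` has a special full column at `p` then `M`
is the concatenation of its left restriction to `p` with its right
restriction to `q`; consequently, concatenation is a bijection from
`M_p × M_q` onto the set of multisegments of `M_{p+q}` having a special full
column at `p`. -/
theorem restriction_decomposition (p q : ℕ) :
    -- decomposition via restrictions
    (∀ M : Multiset Seg, InM (p + q) M → specialFullAt M p →
      M = concatMS p q (leftRes (p + q) p M) (rightRes (p + q) q M)) ∧
    -- the restrictions land in M_p and M_q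
    (∀ M : Multiset Seg, InM (p + q) M → specialFullAt M p →
      InM p (leftRes (p + q) p M) ∧ InM q (rightRes (p + q) q M)) ∧
    -- concatenation lands in the multisegments of `M_{p+q}` special full at `p`
    (∀ M N : Multiset Seg, InM p M → InM q N →
      InM (p + q) (concatMS p q M N) ∧ specialFullAt (concatMS p q M N) p) ∧
    -- concatenation is injective
    (∀ M N M' N' : Multiset Seg, InM p M → InM q N → InM p M' → InM q N' →
      concatMS p q M N = concatMS p q M' N' → M = M' ∧ N = N') := by
  refine ⟨fun M hM hsp => (concatMS_leftRes_rightRes hM hsp).symm,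
    fun M hM _ => ⟨inM_leftRes hM, inM_rightRes hM⟩,
    fun M N hM hN => ⟨inM_concatMS hM hN, specialFullAt_concatMS hM hN⟩,
    fun M N M' N' hM hN hM' hN' h => ⟨?_, ?_⟩⟩
  · rw [← leftRes_concatMS hM hN, h, leftRes_concatMS hM' hN']
  · rw [← rightRes_concatMS hM hN, h, rightRes_concatMS hM' hN']
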